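/- arXiv:math/0611365 — 4 statements merged into one kernel-verified Lean document; each statement's English description precedes it below -/
import Mathlib

section
/- For every irrational α ∈ (0,1) and every positive integer n, ∑_{w ∈ F_n(c_α)} h(w) = B_α(n) + (n+1)⌊nα⌋ + 1. -/
/-- The characteristic word with slope `α`: `c_α(n) = ⌊(n+2)α⌋ - ⌊(n+1)α⌋`. -/
noncomputable def cword (α : ℝ) (n : ℕ) : ℤ :=
  ⌊((n : ℝ) + 2) * α⌋ - ⌊((n : ℝ) + 1) * α⌋

/-- The set of factors of length `n` of a word `W : ℕ → ℤ`. -/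
def factorSet (W : ℕ → ℤ) (n : ℕ) : Set (Fin n → ℤ) :=
  {v | ∃ i : ℕ, ∀ j : Fin n, v j = W (i + j)}

/-- The height of a finite word: the number of components equal to 1. -/
def height {n : ℕ} (w : Fin n → ℤ) : ℕ :=
  (Finset.univ.filter (fun j : Fin n => w j = 1)).card

/-- `B α k` counts the integers `q` with `1 ≤ q < k` such that `{qα} < {kα}`. -/
noncomputable def B (α : ℝ) (k : ℕ) : ℕ :=
  ((Finset.Ico 1 k).filter (fun q : ℕ => Int.fract ((q : ℝ) * α) < Int.fract ((k : ℝ) * α))).card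


/-! The factor of `c_α` of length `n` at position `i` is `w_x(j) = ⌊x + (j+1)α⌋ - ⌊x + jα⌋` with
intercept `x = {(i+1)α}`. For `x ∈ [0, 1)` this word only depends on which of the points
`1 - {kα}`, `1 ≤ k ≤ n`, lie below `x`. These points are distinct and cut `[0, 1)` into `n + 1`
intervals, each of which contains some `{mα}` by density of the irrational rotation, so the
factors correspond bijectively to the left ends `s ∈ {0} ∪ {1 - {kα}}` of these intervals. The
height of `w_s` telescopes to `⌊s + nα⌋ = ⌊nα⌋ + [1 - {nα} ≤ s]`, and exactly `B_α(n) + 1` of the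
left ends satisfy `1 - {nα} ≤ s`. -/

open Finset

namespace Irrational

variable {α : ℝ}

lemma fract_natCast_mul_pos (hα : Irrational α) {k : ℕ} (hk : k ≠ 0) :
    0 < Int.fract (k * α) :=
  (Int.fract_nonneg _).lt_of_ne fun h =>
    (hα.natCast_mul hk).ne_int ⌊(k : ℝ) * α⌋ (by linarith [Int.floor_add_fract ((k : ℝ) * α)])

lemma injective_fract_natCast_mul (hα : Irrational α) :
    Function.Injective fun k : ℕ => Int.fract (k * α) := by
  intro i j h
  obtain ⟨z, hz⟩ := Int.fract_eq_fract.1 h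
  by_contra hij
  refine (hα.intCast_mul (m := (i : ℤ) - j) (by omega)).ne_int z ?_
  push_cast
  linarith

lemma exists_fract_natCast_mul_mem_Ioo (hα : Irrational α) {a b : ℝ} (ha : 0 ≤ a) (hab : a < b)
    (hb : b ≤ 1) : ∃ m : ℕ, Int.fract (m * α) ∈ Set.Ioo a b := by
  have hdense : DenseRange fun m : ℕ => m • (α : UnitAddCircle) := by
    rw [← denseRange_zsmul_iff_nsmul, AddCircle.denseRange_zsmul_coe_iff, div_one]
    exact hα
  obtain ⟨m, y, hy, hym⟩ := hdense.exists_mem_open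
    (QuotientAddGroup.isOpenMap_coe _ isOpen_Ioo) ((Set.nonempty_Ioo.2 hab).image _)
  have hIco : ∀ {z : ℝ}, 0 ≤ z → z < 1 → z ∈ Set.Ico 0 (0 + 1) := fun h0 h1 => ⟨h0, by rwa [zero_add]⟩
  have : y = Int.fract (m * α) := by
    rw [← AddCircle.coe_eq_coe_iff_of_mem_Ico (hIco (ha.trans hy.1.le) (hy.2.trans_le hb))
      (hIco (Int.fract_nonneg _) (Int.fract_lt_one _)), AddCircle.coe_fract, hym,
      ← AddCircle.coe_nsmul, nsmul_eq_mul]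
  exact ⟨m, this ▸ hy⟩

end Irrational

lemma Int.floor_add_eq_ite {x : ℝ} (hx₀ : 0 ≤ x) (hx₁ : x < 1) (y : ℝ) :
    ⌊x + y⌋ = ⌊y⌋ + if 1 - Int.fract y ≤ x then 1 else 0 := by
  have hy₀ := Int.fract_nonneg y
  have hy₁ := Int.fract_lt_one y
  rw [show x + y = x + Int.fract y + ⌊y⌋ by rw [Int.fract]; abel, Int.floor_add_intCast, add_comm]
  congr 1
  split_ifs with h <;>
    exact Int.floor_eq_iff.2 ⟨by push_cast; linarith, by push_cast; linarith⟩

lemma forall_sub_succ_eq_iff {f g : ℕ → ℤ} (h₀ : f 0 = g 0) {n : ℕ} :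
    (∀ j < n, f (j + 1) - f j = g (j + 1) - g j) ↔ ∀ k ≤ n, f k = g k := by
  refine ⟨fun h k hk => ?_, fun h j hj => by rw [h j hj.le, h (j + 1) hj]⟩
  induction k with
  | zero => exact h₀
  | succ k ih => have := h k hk; have := ih (by omega); omega

lemma height_eq_sum {n : ℕ} {w : Fin n → ℤ} (hw : ∀ j, w j = 0 ∨ w j = 1) :
    (height w : ℤ) = ∑ j, w j := by
  rw [height, card_filter, Nat.cast_sum]
  refine sum_congr rfl fun j _ => ?_
  rcases hw j with h | h <;> simp [h]

noncomputable def mechFactor (α x : ℝ) (n : ℕ) : Fin n → ℤ :=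
  fun j => ⌊x + (j + 1) * α⌋ - ⌊x + j * α⌋

/-- `⌊x + k α⌋` jumps by one when the intercept `x ∈ [0, 1)` passes `cutPoint α k`. -/
noncomputable def cutPoint (α : ℝ) (k : ℕ) : ℝ :=
  1 - Int.fract (k * α)

noncomputable def cutPoints (α : ℝ) (n : ℕ) : Finset ℝ :=
  insert 0 ((Icc 1 n).image (cutPoint α))

section MechFactor

variable {α x y : ℝ} {n : ℕ}

lemma floor_add_natCast_mul (hx₀ : 0 ≤ x) (hx₁ : x < 1) (k : ℕ) :
    ⌊x + k * α⌋ = ⌊k * α⌋ + if cutPoint α k ≤ x then 1 else 0 :=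
  Int.floor_add_eq_ite hx₀ hx₁ _

lemma mechFactor_eq_zero_or_one (hα₀ : 0 ≤ α) (hα₁ : α ≤ 1) (j : Fin n) :
    mechFactor α x n j = 0 ∨ mechFactor α x n j = 1 := by
  have hle : ⌊x + j * α⌋ ≤ ⌊x + (j + 1) * α⌋ := Int.floor_le_floor (by nlinarith)
  have hle' : ⌊x + (j + 1) * α⌋ ≤ ⌊x + j * α⌋ + 1 := by
    rw [← Int.floor_add_one]; exact Int.floor_le_floor (by nlinarith)
  unfold mechFactor
  omega

lemma sum_mechFactor : ∑ j, mechFactor α x n j = ⌊x + n * α⌋ - ⌊x⌋ := by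
  simp only [mechFactor]
  rw [Fin.sum_univ_eq_sum_range (fun j : ℕ => ⌊x + (j + 1) * α⌋ - ⌊x + j * α⌋) n]
  simpa using sum_range_sub (fun j : ℕ => ⌊x + j * α⌋) n

lemma height_mechFactor (hα₀ : 0 ≤ α) (hα₁ : α ≤ 1) (hx₀ : 0 ≤ x) (hx₁ : x < 1) :
    (height (mechFactor α x n) : ℤ) = ⌊n * α⌋ + if cutPoint α n ≤ x then 1 else 0 := by
  rw [height_eq_sum (mechFactor_eq_zero_or_one hα₀ hα₁), sum_mechFactor,
    floor_add_natCast_mul hx₀ hx₁, Int.floor_eq_zero_iff.2 ⟨hx₀, hx₁⟩, sub_zero]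

lemma mechFactor_eq_iff (hx₀ : 0 ≤ x) (hx₁ : x < 1) (hy₀ : 0 ≤ y) (hy₁ : y < 1) :
    mechFactor α x n = mechFactor α y n ↔ ∀ k ≤ n, (cutPoint α k ≤ x ↔ cutPoint α k ≤ y) := by
  have hfloor : mechFactor α x n = mechFactor α y n ↔ ∀ k ≤ n, ⌊x + k * α⌋ = ⌊y + k * α⌋ := by
    rw [← forall_sub_succ_eq_iff (by simp [Int.floor_eq_zero_iff.2 ⟨hx₀, hx₁⟩,
      Int.floor_eq_zero_iff.2 ⟨hy₀, hy₁⟩]), funext_iff, Fin.forall_iff]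
    simp [mechFactor]
  rw [hfloor]
  refine forall₂_congr fun k _ => ?_
  rw [floor_add_natCast_mul hx₀ hx₁, floor_add_natCast_mul hy₀ hy₁]
  by_cases hx : cutPoint α k ≤ x <;> by_cases hy : cutPoint α k ≤ y <;> simp [hx, hy]

lemma factor_cword_eq_mechFactor (i : ℕ) :
    (fun j : Fin n => cword α (i + j)) = mechFactor α (Int.fract ((i + 1) * α)) n := by
  have hshift : ∀ c : ℝ, ⌊Int.fract ((i + 1) * α) + c⌋ = ⌊(i + 1) * α + c⌋ - ⌊(i + 1) * α⌋ :=
    fun c => by rw [Int.fract, sub_add_eq_add_sub, Int.floor_sub_intCast]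
  funext j
  simp only [mechFactor, cword, hshift]
  push_cast
  ring_nf

end MechFactor

section CutPoints

variable {α : ℝ} {n : ℕ}

lemma cutPoint_pos (k : ℕ) : 0 < cutPoint α k :=
  sub_pos.2 (Int.fract_lt_one _)

lemma cutPoint_zero : cutPoint α 0 = 1 := by
  simp [cutPoint]

lemma cutPoint_mem_cutPoints {k : ℕ} (hk₀ : k ≠ 0) (hkn : k ≤ n) :
    cutPoint α k ∈ cutPoints α n :=
  mem_insert_of_mem (mem_image_of_mem _ (mem_Icc.2 ⟨Nat.one_le_iff_ne_zero.2 hk₀, hkn⟩))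

lemma zero_notMem_image_cutPoint (s : Finset ℕ) : (0 : ℝ) ∉ s.image (cutPoint α) := by
  simp [fun k => (cutPoint_pos (α := α) k).ne']

lemma le_of_mechFactor_eq {s y : ℝ} (hs : s ∈ cutPoints α n) (hs₁ : s < 1) (hy₀ : 0 ≤ y)
    (hy₁ : y < 1) (h : mechFactor α s n = mechFactor α y n) : s ≤ y := by
  rcases mem_insert.1 hs with rfl | hs
  · exact hy₀
  · obtain ⟨k, hk, rfl⟩ := mem_image.1 hs
    exact ((mechFactor_eq_iff (cutPoint_pos k).le hs₁ hy₀ hy₁).1 h k (mem_Icc.1 hk).2).1 le_rfl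

lemma exists_mem_cutPoints_mechFactor_eq {x : ℝ} (hx₀ : 0 ≤ x) (hx₁ : x < 1) :
    ∃ s ∈ cutPoints α n, mechFactor α s n = mechFactor α x n := by
  obtain ⟨s, hs, hmax⟩ := exists_max_image ((cutPoints α n).filter (· ≤ x)) id
    ⟨0, by simp [cutPoints, hx₀]⟩
  rw [mem_filter] at hs
  have hs₀ : 0 ≤ s := hmax 0 (by simp [cutPoints, hx₀])
  refine ⟨s, hs.1, (mechFactor_eq_iff hs₀ (hs.2.trans_lt hx₁) hx₀ hx₁).2 fun k hk =>
    ⟨fun h => h.trans hs.2, fun h => hmax _ (mem_filter.2 ⟨cutPoint_mem_cutPoints ?_ hk, h⟩)⟩⟩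
  rintro rfl
  rw [cutPoint_zero] at h
  linarith

namespace Irrational

lemma cutPoint_lt_one (hα : Irrational α) {k : ℕ} (hk : k ≠ 0) : cutPoint α k < 1 :=
  sub_lt_self _ (hα.fract_natCast_mul_pos hk)

lemma injective_cutPoint (hα : Irrational α) : Function.Injective (cutPoint α) :=
  fun _ _ h => hα.injective_fract_natCast_mul (sub_right_injective h)

lemma mem_Ico_of_mem_cutPoints (hα : Irrational α) {s : ℝ} (hs : s ∈ cutPoints α n) :
    s ∈ Set.Ico 0 1 := by
  rcases mem_insert.1 hs with rfl | hs
  · simp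
  · obtain ⟨k, hk, rfl⟩ := mem_image.1 hs
    exact ⟨(cutPoint_pos k).le, hα.cutPoint_lt_one (by simp at hk; omega)⟩

lemma card_cutPoints (hα : Irrational α) : #(cutPoints α n) = n + 1 := by
  rw [cutPoints, card_insert_of_notMem (zero_notMem_image_cutPoint _),
    card_image_of_injective _ hα.injective_cutPoint, Nat.card_Icc, Nat.add_sub_cancel]

lemma injOn_mechFactor_cutPoints (hα : Irrational α) :
    Set.InjOn (mechFactor α · n) (cutPoints α n) := by
  intro s hs t ht h
  obtain ⟨hs₀, hs₁⟩ := hα.mem_Ico_of_mem_cutPoints hs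
  obtain ⟨ht₀, ht₁⟩ := hα.mem_Ico_of_mem_cutPoints ht
  exact le_antisymm (le_of_mechFactor_eq hs hs₁ ht₀ ht₁ h)
    (le_of_mechFactor_eq ht ht₁ hs₀ hs₁ h.symm)

lemma exists_fract_mechFactor_eq (hα : Irrational α) {s : ℝ} (hs : s ∈ cutPoints α n) :
    ∃ i : ℕ, mechFactor α (Int.fract ((i + 1) * α)) n = mechFactor α s n := by
  obtain ⟨hs₀, hs₁⟩ := hα.mem_Ico_of_mem_cutPoints hs
  -- `u` is the next cut point after `s` (or `1`): every intercept in `[s, u)` has the factor of `s`.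
  obtain ⟨u, hu, hmin⟩ := exists_min_image (insert 1 ((cutPoints α n).filter (s < ·))) id
    ⟨1, mem_insert_self _ _⟩
  have hsu : s < u := by
    rcases mem_insert.1 hu with rfl | hu
    · exact hs₁
    · exact (mem_filter.1 hu).2
  obtain ⟨m, hm⟩ := hα.exists_fract_natCast_mul_mem_Ioo hs₀ hsu (hmin 1 (mem_insert_self _ _))
  have hm₀ : m ≠ 0 := by
    rintro rfl
    simp only [Nat.cast_zero, zero_mul, Int.fract_zero, Set.mem_Ioo] at hm
    linarith
  refine ⟨m - 1, ?_⟩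
  rw [← Nat.cast_add_one, Nat.sub_add_cancel (Nat.one_le_iff_ne_zero.2 hm₀)]
  refine (mechFactor_eq_iff (Int.fract_nonneg _) (Int.fract_lt_one _) hs₀ hs₁).2 fun k hk =>
    ⟨fun h => ?_, fun h => h.trans hm.1.le⟩
  by_contra hks
  push Not at hks
  rcases eq_or_ne k 0 with rfl | hk₀
  · rw [cutPoint_zero] at h
    linarith [Int.fract_lt_one ((m : ℝ) * α)]
  · have : u ≤ cutPoint α k :=
      hmin _ (mem_insert_of_mem (mem_filter.2 ⟨cutPoint_mem_cutPoints hk₀ hk, hks⟩))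
    linarith [hm.2]

lemma factorSet_cword_eq_image (hα : Irrational α) :
    factorSet (cword α) n = (mechFactor α · n) '' cutPoints α n := by
  have hrange : factorSet (cword α) n =
      Set.range fun i : ℕ => mechFactor α (Int.fract ((i + 1) * α)) n := by
    ext w
    simp [factorSet, ← factor_cword_eq_mechFactor, funext_iff, eq_comm]
  rw [hrange]
  refine Set.Subset.antisymm (Set.range_subset_iff.2 fun i => ?_) ?_
  · exact exists_mem_cutPoints_mechFactor_eq (Int.fract_nonneg _) (Int.fract_lt_one _)
  · rintro _ ⟨s, hs, rfl⟩
    exact hα.exists_fract_mechFactor_eq hs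

lemma B_add_one (hα : Irrational α) (hn : 1 ≤ n) :
    B α n + 1 = #((Icc 1 n).filter fun k : ℕ => Int.fract (k * α) ≤ Int.fract (n * α)) := by
  rw [B, ← Ico_insert_right hn, filter_insert, if_pos le_rfl, card_insert_of_notMem (by simp)]
  congr 2
  refine filter_congr fun k hk => ⟨le_of_lt, fun h => h.lt_of_ne fun he => ?_⟩
  exact (mem_Ico.1 hk).2.ne (hα.injective_fract_natCast_mul he)

lemma sum_cutPoints_ite (hα : Irrational α) (hn : 1 ≤ n) :
    ∑ s ∈ cutPoints α n, (if cutPoint α n ≤ s then 1 else 0 : ℤ) = B α n + 1 := by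
  rw [cutPoints, sum_insert (zero_notMem_image_cutPoint _), if_neg (cutPoint_pos n).not_ge,
    zero_add, sum_image fun _ _ _ _ h => hα.injective_cutPoint h, sum_boole, ← Nat.cast_add_one,
    hα.B_add_one hn]
  simp only [cutPoint, sub_le_sub_iff_left]

end Irrational

end CutPoints

theorem stmt_2 (α : ℝ) (hα : Irrational α) (h0 : 0 < α) (h1 : α < 1)
    (n : ℕ) (hn : 1 ≤ n) :
    (∑ᶠ w ∈ factorSet (cword α) n, (height w : ℤ)) =
      (B α n : ℤ) + ((n : ℤ) + 1) * ⌊(n : ℝ) * α⌋ + 1 := by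
  rw [hα.factorSet_cword_eq_image, finsum_mem_image hα.injOn_mechFactor_cutPoints,
    finsum_mem_coe_finset, sum_congr rfl fun s hs => height_mechFactor h0.le h1.le
      (hα.mem_Ico_of_mem_cutPoints hs).1 (hα.mem_Ico_of_mem_cutPoints hs).2,
    sum_add_distrib, sum_const, hα.card_cutPoints, hα.sum_cutPoints_ite hn, nsmul_eq_mul]
  push_cast
  ring
end

section
/- Let α ∈ (0,1/2) be irrational and let k ≥ 3 be an integer. Then B_α(k) − 2B_α(k−1) + B_α(k−2) equals 1−k if {kα} ∈ [0,α), equals k−1 if {kα} ∈ [α,2α), and equals 0 if {kα} ∈ [2α,1). -/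
namespace Int

variable {R : Type*} [Field R] [LinearOrder R] [IsStrictOrderedRing R] [FloorRing R]

theorem floor_add_eq_and_fract_add_or (a b : R) :
    (⌊a + b⌋ = ⌊a⌋ + ⌊b⌋ ∧ fract (a + b) = fract a + fract b) ∨
      (⌊a + b⌋ = ⌊a⌋ + ⌊b⌋ + 1 ∧ fract (a + b) = fract a + fract b - 1) := by
  have hlo := le_floor_add a b
  have hhi := le_floor_add_floor a b
  rcases (by omega : ⌊a + b⌋ = ⌊a⌋ + ⌊b⌋ ∨ ⌊a + b⌋ = ⌊a⌋ + ⌊b⌋ + 1) with h | h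
  · exact Or.inl ⟨h, by simp only [fract, h]; push_cast; ring⟩
  · exact Or.inr ⟨h, by simp only [fract, h]; push_cast; ring⟩

theorem ite_fract_lt_fract_add (a b : R) (hb : 0 < fract b) :
    (if fract a < fract (a + b) then 1 else 0 : ℤ) = 1 + ⌊a⌋ + ⌊b⌋ - ⌊a + b⌋ := by
  rcases floor_add_eq_and_fract_add_or a b with ⟨hfl, hfr⟩ | ⟨hfl, hfr⟩
  · rw [if_pos (by linarith), hfl]; ring
  · rw [if_neg (by linarith [fract_lt_one b]), hfl]; ring

theorem floor_sub_two_floor_sub_add_floor_sub (x α : R) (h0 : 0 < α) (h1 : 2 * α < 1) :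
    ⌊x⌋ - 2 * ⌊x - α⌋ + ⌊x - 2 * α⌋ =
      if fract x < α then 1 else if fract x < 2 * α then -1 else 0 := by
  have hαfrac : ⌊α⌋ = 0 ∧ fract α = α := by
    constructor
    · exact floor_eq_zero_iff.2 ⟨h0.le, by linarith⟩
    · exact fract_eq_self.2 ⟨h0.le, by linarith⟩
  have step₁ := floor_add_eq_and_fract_add_or (x - α) α
  have step₂ := floor_add_eq_and_fract_add_or (x - 2 * α) α
  rw [sub_add_cancel, hαfrac.1, hαfrac.2] at step₁
  rw [show x - 2 * α + α = x - α by ring, hαfrac.1, hαfrac.2] at step₂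
  have := fract_nonneg x
  have := fract_nonneg (x - α)
  have := fract_lt_one (x - α)
  have := fract_nonneg (x - 2 * α)
  have := fract_lt_one (x - 2 * α)
  rcases step₁ with ⟨e₁, f₁⟩ | ⟨e₁, f₁⟩ <;> rcases step₂ with ⟨e₂, f₂⟩ | ⟨e₂, f₂⟩ <;>
    split_ifs <;> first | omega | (exfalso; linarith)

end Int

theorem Irrational.fract_pos {x : ℝ} (hx : Irrational x) : 0 < Int.fract x :=
  Int.fract_pos.2 (hx.ne_int _)

theorem B_eq_sum_floor {α : ℝ} (hα : Irrational α) {k : ℕ} (hk : 1 ≤ k) :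
    (B α k : ℤ) = (k - 1) * (1 - ⌊(k : ℝ) * α⌋) + 2 * ∑ q ∈ Finset.Ico 1 k, ⌊(q : ℝ) * α⌋ := by
  have hindicator : ∀ q ∈ Finset.Ico 1 k,
      (if Int.fract ((q : ℝ) * α) < Int.fract ((k : ℝ) * α) then 1 else 0 : ℤ) =
        1 + ⌊(q : ℝ) * α⌋ + ⌊((k - q : ℕ) : ℝ) * α⌋ - ⌊(k : ℝ) * α⌋ := by
    intro q hq
    rw [Finset.mem_Ico] at hq
    have hsplit : (k : ℝ) * α = q * α + ((k - q : ℕ) : ℝ) * α := by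
      rw [Nat.cast_sub hq.2.le]; ring
    rw [hsplit]
    exact Int.ite_fract_lt_fract_add _ _ ((hα.natCast_mul (by omega)).fract_pos)
  have hreflect : ∑ q ∈ Finset.Ico 1 k, ⌊((k - q : ℕ) : ℝ) * α⌋ =
      ∑ q ∈ Finset.Ico 1 k, ⌊(q : ℝ) * α⌋ := by
    rw [Finset.sum_Ico_reflect (fun q : ℕ => ⌊(q : ℝ) * α⌋) 1 (Nat.le_succ k),
      Nat.add_sub_cancel_left, Nat.add_sub_cancel]
  rw [B, Finset.card_filter, Nat.cast_sum, Finset.sum_congr rfl (fun q hq => by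
    push_cast; exact hindicator q hq)]
  rw [Finset.sum_sub_distrib, Finset.sum_add_distrib, Finset.sum_add_distrib, hreflect]
  simp only [Finset.sum_const, Nat.card_Ico, nsmul_eq_mul, mul_one]
  push_cast [Nat.cast_sub hk]
  ring

theorem B_second_diff {α : ℝ} (hα : Irrational α) {k : ℕ} (hk : 3 ≤ k) :
    (B α k : ℤ) - 2 * B α (k - 1) + B α (k - 2) =
      -((k : ℤ) - 1) * (⌊(k : ℝ) * α⌋ - 2 * ⌊(k : ℝ) * α - α⌋ + ⌊(k : ℝ) * α - 2 * α⌋) := by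
  obtain ⟨n, rfl⟩ : ∃ n, k = n + 2 := ⟨k - 2, by omega⟩
  rw [Nat.add_sub_cancel, show n + 2 - 1 = n + 1 by omega, B_eq_sum_floor hα (by omega),
    B_eq_sum_floor hα (by omega), B_eq_sum_floor hα (by omega),
    Finset.sum_Ico_succ_top (by omega : 1 ≤ n + 1), Finset.sum_Ico_succ_top (by omega : 1 ≤ n)]
  have h₁ : ((n + 1 : ℕ) : ℝ) * α = ((n + 2 : ℕ) : ℝ) * α - α := by push_cast; ring
  have h₀ : (n : ℝ) * α = ((n + 2 : ℕ) : ℝ) * α - 2 * α := by push_cast; ring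
  rw [h₁, h₀]
  push_cast
  ring

theorem stmt_5 (α : ℝ) (hα : Irrational α) (h0 : 0 < α) (h1 : α < 1/2)
    (k : ℕ) (hk : 3 ≤ k) :
    (Int.fract ((k : ℝ) * α) ∈ Set.Ico (0 : ℝ) α →
      (B α k : ℤ) - 2 * B α (k - 1) + B α (k - 2) = 1 - k) ∧
    (Int.fract ((k : ℝ) * α) ∈ Set.Ico α (2 * α) →
      (B α k : ℤ) - 2 * B α (k - 1) + B α (k - 2) = k - 1) ∧
    (Int.fract ((k : ℝ) * α) ∈ Set.Ico (2 * α) 1 →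
      (B α k : ℤ) - 2 * B α (k - 1) + B α (k - 2) = 0) := by
  rw [B_second_diff hα hk, Int.floor_sub_two_floor_sub_add_floor_sub _ _ h0 (by linarith)]
  refine ⟨fun ⟨_, h⟩ => ?_, fun ⟨hlo, hhi⟩ => ?_, fun ⟨hlo, _⟩ => ?_⟩
  · rw [if_pos h]; ring
  · rw [if_neg hlo.not_gt, if_pos hhi]; ring
  · rw [if_neg (by linarith), if_neg hlo.not_gt]; ring
end

section
/- Let α ∈ (0,1) be irrational and let k be an odd positive integer. Then B_α(k) is even. -/
theorem Int.fract_lt_fract_add_of_fract_lt {R : Type*} [CommRing R] [LinearOrder R]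
    [IsStrictOrderedRing R] [FloorRing R] {a b : R} (ha : 0 < Int.fract a)
    (h : Int.fract a < Int.fract (a + b)) : Int.fract b < Int.fract (a + b) := by
  obtain ⟨z, hz⟩ := Int.fract_add a b
  have hz_le : (z : R) ≤ 0 := by linarith [Int.fract_add_le a b]
  have hz_gt : (-1 : R) < z := by linarith [Int.fract_lt_one b]
  have hz0 : z = 0 := by
    have : z ≤ 0 := by exact_mod_cast hz_le
    have : -1 < z := by exact_mod_cast hz_gt
    omega
  subst hz0
  push_cast at hz
  linarith

theorem Finset.even_card_of_involution {α : Type*} (s : Finset α) (f : α → α)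
    (hf : ∀ a ∈ s, f a ∈ s) (hinv : ∀ a ∈ s, f (f a) = a) (hne : ∀ a ∈ s, f a ≠ a) :
    Even s.card := by
  have hsum : ∑ _a ∈ s, (1 : ZMod 2) = 0 :=
    Finset.sum_involution (fun a _ => f a) (fun _ _ => by decide) (fun a ha _ => hne a ha) hf
      hinv
  rw [Finset.sum_const, nsmul_eq_mul, mul_one, ZMod.natCast_eq_zero_iff] at hsum
  exact even_iff_two_dvd.mpr hsum

theorem fract_sub_mul_lt_of_fract_mul_lt {α : ℝ} (hα : Irrational α) {k q : ℕ} (hq : 1 ≤ q)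
    (hqk : q < k) (h : Int.fract ((q : ℝ) * α) < Int.fract ((k : ℝ) * α)) :
    Int.fract (((k - q : ℕ) : ℝ) * α) < Int.fract ((k : ℝ) * α) := by
  have hk : (k : ℝ) * α = q * α + ((k - q : ℕ) : ℝ) * α := by
    rw [Nat.cast_sub hqk.le]; ring
  rw [hk] at h ⊢
  exact Int.fract_lt_fract_add_of_fract_lt (hα.natCast_mul (by omega)).fract_pos h

theorem stmt_6_general (α : ℝ) (hα : Irrational α)
    (k : ℕ) (hodd : Odd k) :
    Even (B α k) := by
  obtain ⟨m, rfl⟩ := hodd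
  refine Finset.even_card_of_involution _ (2 * m + 1 - ·) ?_ ?_ ?_ <;>
    simp only [Finset.mem_filter, Finset.mem_Ico]
  · rintro q ⟨⟨hq, hqk⟩, hlt⟩
    exact ⟨⟨by omega, by omega⟩, fract_sub_mul_lt_of_fract_mul_lt hα hq hqk hlt⟩
  · rintro q ⟨⟨-, hqk⟩, -⟩
    omega
  · rintro q - hfix
    omega

theorem stmt_6 (α : ℝ) (hα : Irrational α) (h0 : 0 < α) (h1 : α < 1)
    (k : ℕ) (hk : 1 ≤ k) (hodd : Odd k) :
    Even (B α k) :=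
  stmt_6_general α hα k hodd
end

section
/- Let α ∈ (1/2,1) be irrational and let k be a positive integer. Then B_α(k) ≡ B_{1−α}(k) + ε (mod 2), where ε = 1 if k is even and ε = 0 if k is odd. -/
theorem Irrational.fract_ne_zero {x : ℝ} (hx : Irrational x) : Int.fract x ≠ 0 := fun h =>
  hx.ne_int ⌊x⌋ (by rwa [Int.fract, sub_eq_zero] at h)

theorem Irrational.fract_natCast_mul_one_sub {α : ℝ} (hα : Irrational α) {n : ℕ} (hn : n ≠ 0) :
    Int.fract (n * (1 - α)) = 1 - Int.fract (n * α) := by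
  rw [show (n : ℝ) * (1 - α) = n + -(n * α) by ring, Int.fract_natCast_add,
    Int.fract_neg (hα.natCast_mul hn).fract_ne_zero]

theorem Irrational.fract_natCast_mul_ne {α : ℝ} (hα : Irrational α) {q k : ℕ} (hqk : q ≠ k) :
    Int.fract (q * α) ≠ Int.fract (k * α) := by
  rw [Ne, Int.fract_eq_fract, not_exists]
  intro z hz
  refine (hα.intCast_mul (sub_ne_zero.mpr (by omega : (q : ℤ) ≠ k))).ne_int z ?_
  push_cast
  linarith

theorem B_add_B_one_sub {α : ℝ} (hα : Irrational α) {k : ℕ} (hk : k ≠ 0) :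
    B α k + B (1 - α) k = k - 1 := by
  have hflip : ∀ q ∈ Finset.Ico 1 k, Int.fract (q * (1 - α)) < Int.fract (k * (1 - α)) ↔
      ¬ Int.fract (q * α) < Int.fract (k * α) := by
    intro q hq
    have hq := Finset.mem_Ico.mp hq
    rw [hα.fract_natCast_mul_one_sub (by omega), hα.fract_natCast_mul_one_sub hk,
      sub_lt_sub_iff_left, not_lt]
    exact ⟨le_of_lt, fun h => h.lt_of_ne' (hα.fract_natCast_mul_ne hq.2.ne)⟩
  rw [B, B, Finset.filter_congr hflip, Finset.card_filter_add_card_filter_not, Nat.card_Ico]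

theorem stmt_9_general (α : ℝ) (hα : Irrational α)
    (k : ℕ) (hk : 1 ≤ k) :
    B α k ≡ B (1 - α) k + (if Even k then 1 else 0) [MOD 2] := by
  have hsum := B_add_B_one_sub hα (k := k) (by omega)
  rw [Nat.ModEq]
  split_ifs with he
  · rw [Nat.even_iff] at he
    omega
  · rw [Nat.not_even_iff_odd, Nat.odd_iff] at he
    omega

theorem stmt_9 (α : ℝ) (hα : Irrational α) (h0 : 1/2 < α) (h1 : α < 1)
    (k : ℕ) (hk : 1 ≤ k) :
    B α k ≡ B (1 - α) k + (if Even k then 1 else 0) [MOD 2] :=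
  stmt_9_general α hα k hk
end
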